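/- arXiv:2509.04477 — 2 statements merged into one kernel-verified Lean document; each statement's English description precedes it below -/
import Mathlib

section
/- Uniform approximation by finitely generated transforms: suppose X and Y are compact metric spaces and Φ : X × Y → ℝ is λ-Lipschitz in each variable. Then for every ε > 0 there exists a finite subset Ỹ ⊆ Y such that for every Y-convex function f : X → ℝ there exists a Ỹ-convex function g : X → ℝ with sup_{x ∈ X} |f(x) − g(x)| < ε. In fact g can be taken to be the Ỹ-transform of the restriction of f^X to Ỹ. -/
/-- The X-transform of `f : X → ℝ`: `f^X(y) = sup_{x ∈ X} (Φ(x, y) − f(x))`. -/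
noncomputable def transformX {X Y : Type*} (Φ : X → Y → ℝ) (Xs : Set X) (f : X → ℝ)
    (y : Y) : EReal :=
  ⨆ x : Xs, ((Φ x y - f x : ℝ) : EReal)

/-- The Ỹ-transform of an extended-real-valued `g`:
`g^Ỹ(x) = sup_{y ∈ Ỹ} (Φ(x, y) − g(y))`. -/
noncomputable def transformY {X Y : Type*} (Φ : X → Y → ℝ) (Ys : Set Y) (g : Y → EReal)
    (x : X) : EReal :=
  ⨆ y : Ys, (((Φ x y : ℝ) : EReal) - g y)

/-- `f` (with domain `D`) is Ỹ-convex if it is the restriction to `D` of the Ỹ-transform of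
some extended-real-valued function. -/
def YConvexOn {X Y : Type*} (Φ : X → Y → ℝ) (Ys : Set Y) (D : Set X) (f : X → ℝ) : Prop :=
  ∃ g : Y → EReal, ∀ x ∈ D, (f x : EReal) = transformY Φ Ys g x

private lemma ereal_sub_le_iff (a b : ℝ) (e : EReal) :
    (a : EReal) - e ≤ (b : EReal) ↔ ((a - b : ℝ) : EReal) ≤ e := by
  induction e using EReal.rec
  · simp [← EReal.coe_sub]
  · rw [← EReal.coe_sub, EReal.coe_le_coe_iff, EReal.coe_le_coe_iff]
    constructor <;> intro h <;> linarith

  · simp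

private lemma ereal_sub_le_of_le (a c : ℝ) (e : EReal) (h : (c : EReal) ≤ e) :
    (a : EReal) - e ≤ ((a - c : ℝ) : EReal) := by
  rw [ereal_sub_le_iff]; exact le_trans (by norm_num) h

/-- Uniform approximation by finitely generated transforms: for compact `X`, `Y` and `Φ`
Lipschitz in each variable with constant `λ`, for every `ε > 0` there is a finite `Ỹ ⊆ Y`
such that every `Y`-convex `f : X → ℝ` is within `ε` (uniformly) of some `Ỹ`-convex
`g : X → ℝ`; in fact `g` can be taken to be the `Ỹ`-transform of `f^X`. -/
theorem finitely_convex_dense {X Y : Type*} [MetricSpace X] [MetricSpace Y]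
    [CompactSpace X] [CompactSpace Y] (Φ : X → Y → ℝ) (lam : ℝ)
    (hΦx : ∀ x₁ x₂ : X, ∀ y : Y, |Φ x₁ y - Φ x₂ y| ≤ lam * dist x₁ x₂)
    (hΦy : ∀ x : X, ∀ y₁ y₂ : Y, |Φ x y₁ - Φ x y₂| ≤ lam * dist y₁ y₂)
    (ε : ℝ) (hε : 0 < ε) :
    ∃ Ytil : Finset Y, ∀ f : X → ℝ, YConvexOn Φ Set.univ Set.univ f →
      ∃ g : X → ℝ, YConvexOn Φ (↑Ytil : Set Y) Set.univ g ∧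
        (∀ x : X, (g x : EReal) = transformY Φ (↑Ytil : Set Y) (transformX Φ Set.univ f) x) ∧
        ∀ x : X, |f x - g x| < ε := by
  by_cases hX : Nonempty X
  swap
  · -- X empty: everything is vacuous
    rw [not_nonempty_iff] at hX
    exact ⟨∅, fun f _ => ⟨f, ⟨fun _ => 0, fun x _ => (hX.false x).elim⟩,
      fun x => (hX.false x).elim, fun x => (hX.false x).elim⟩⟩
  by_cases hY : Nonempty Y
  swap
  · -- Y empty: no Y-convex functions exist (since X is nonempty)
    rw [not_nonempty_iff] at hY
    refine ⟨∅, fun f hf => ?_⟩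
    exfalso
    obtain ⟨h, hh⟩ := hf
    obtain ⟨x0⟩ := hX
    have h1 := hh x0 (Set.mem_univ x0)
    have he : IsEmpty ((Set.univ : Set Y)) := ⟨fun y => hY.false y.1⟩
    rw [transformY, iSup_of_empty] at h1
    exact EReal.coe_ne_bot _ h1
  obtain ⟨x0⟩ := hX
  obtain ⟨ybar⟩ := hY
  -- Lipschitz constant made nonnegative
  set L : ℝ := max lam 0 with hLdef
  have hL : 0 ≤ L := le_max_right _ _
  have hΦx' : ∀ x₁ x₂ : X, ∀ y : Y, |Φ x₁ y - Φ x₂ y| ≤ L * dist x₁ x₂ := fun x₁ x₂ y =>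
    le_trans (hΦx x₁ x₂ y) (mul_le_mul_of_nonneg_right (le_max_left _ _) dist_nonneg)
  have hΦy' : ∀ x : X, ∀ y₁ y₂ : Y, |Φ x y₁ - Φ x y₂| ≤ L * dist y₁ y₂ := fun x y₁ y₂ =>
    le_trans (hΦy x y₁ y₂) (mul_le_mul_of_nonneg_right (le_max_left _ _) dist_nonneg)
  set δ : ℝ := ε / (2 * L + 1) with hδdef
  have h2L1 : 0 < 2 * L + 1 := by linarith
  have hδ : 0 < δ := div_pos hε h2L1
  have hδε : 2 * L * δ < ε := by
    have : (2 * L + 1) * δ = ε := by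
      rw [hδdef, mul_div_cancel₀ _ (ne_of_gt h2L1)]
    nlinarith
  -- finite δ-net
  obtain ⟨t, htfin, htnet⟩ := Metric.totallyBounded_iff.mp
    ((isCompact_univ : IsCompact (Set.univ : Set Y)).totallyBounded) δ hδ
  refine ⟨htfin.toFinset, fun f hf => ?_⟩
  have hnet : ∀ y : Y, ∃ z ∈ htfin.toFinset, dist y z < δ := by
    intro y
    have := htnet (Set.mem_univ y)
    simp only [Set.mem_iUnion, Metric.mem_ball] at this
    obtain ⟨z, hz, hdz⟩ := this
    exact ⟨z, htfin.mem_toFinset.mpr hz, hdz⟩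
  obtain ⟨h, hh'⟩ := hf
  have hh : ∀ x : X, (f x : EReal)
      = ⨆ y : (Set.univ : Set Y), (((Φ x y : ℝ) : EReal) - h y) :=
    fun x => hh' x (Set.mem_univ x)
  -- every term of the sup is ≤ f x
  have hterm_le : ∀ (x : X) (y : Y), ((Φ x y : ℝ) : EReal) - h y ≤ (f x : EReal) := by
    intro x y
    rw [hh x]
    exact le_iSup (fun y : (Set.univ : Set Y) => ((Φ x y.1 : ℝ) : EReal) - h y.1)
      ⟨y, Set.mem_univ y⟩
  have h_ne_bot : ∀ y : Y, h y ≠ ⊥ := by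
    intro y hy
    have := hterm_le x0 y
    rw [hy] at this
    simp at this
  have h_ex : ∃ y0 : Y, h y0 ≠ ⊤ := by
    by_contra hcon
    push_neg at hcon
    have : (f x0 : EReal) = ⊥ := by
      rw [hh x0]
      refine le_antisymm (iSup_le fun y => ?_) bot_le
      rw [hcon y.1]; simp
    exact EReal.coe_ne_bot _ this
  obtain ⟨y0, hy0⟩ := h_ex
  set c : ℝ := (h y0).toReal with hcdef
  have hc : (c : EReal) = h y0 := EReal.coe_toReal hy0 (h_ne_bot y0)
  have hfl : ∀ x : X, Φ x y0 - c ≤ f x := by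
    intro x
    have := hterm_le x y0
    rw [← hc, ← EReal.coe_sub, EReal.coe_le_coe_iff] at this
    exact this
  -- diameter bound
  set D : ℝ := Metric.diam (Set.univ : Set Y) with hDdef
  have hdiam : ∀ y1 y2 : Y, dist y1 y2 ≤ D :=
    fun y1 y2 => Metric.dist_le_diam_of_mem isCompact_univ.isBounded
      (Set.mem_univ y1) (Set.mem_univ y2)
  -- F = f^X is real-valued
  set F : Y → EReal := transformX Φ Set.univ f with hFdef
  have hF_term : ∀ (x : X) (y : Y), ((Φ x y - f x : ℝ) : EReal) ≤ F y := by
    intro x y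
    exact le_iSup (fun x : (Set.univ : Set X) => ((Φ x.1 y - f x.1 : ℝ) : EReal))
      ⟨x, Set.mem_univ x⟩
  have hF_ub : ∀ y : Y, F y ≤ ((c + L * D : ℝ) : EReal) := by
    intro y
    refine iSup_le fun x => ?_
    rw [EReal.coe_le_coe_iff]
    have h1 := hfl x.1
    have h2 := abs_le.mp (hΦy' x.1 y y0)
    have h3 : L * dist y y0 ≤ L * D := mul_le_mul_of_nonneg_left (hdiam y y0) hL
    linarith [h2.2]
  have hF_ne_top : ∀ y : Y, F y ≠ ⊤ :=
    fun y => ne_top_of_le_ne_top (EReal.coe_ne_top _) (hF_ub y)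
  have hF_ne_bot : ∀ y : Y, F y ≠ ⊥ := by
    intro y hy
    have := hF_term x0 y
    rw [hy, le_bot_iff] at this
    exact EReal.coe_ne_bot _ this
  set Fr : Y → ℝ := fun y => (F y).toReal with hFrdef
  have hFr : ∀ y : Y, (Fr y : EReal) = F y := fun y => EReal.coe_toReal (hF_ne_top y) (hF_ne_bot y)
  have hFr_term : ∀ (x : X) (y : Y), Φ x y - f x ≤ Fr y := by
    intro x y
    rw [← EReal.coe_le_coe_iff, hFr]
    exact hF_term x y
  -- a Lipschitz-type bound on Fr
  have hFr_lip : ∀ y1 y2 : Y, Fr y1 ≤ Fr y2 + L * dist y1 y2 := by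
    intro y1 y2
    rw [← EReal.coe_le_coe_iff, hFr]
    refine iSup_le fun x => ?_
    rw [EReal.coe_le_coe_iff]
    have h1 := hFr_term x.1 y2
    have h2 := abs_le.mp (hΦy' x.1 y1 y2)
    linarith [h2.1]
  -- F ≤ h
  have hFh : ∀ y : Y, F y ≤ h y := by
    intro y
    refine iSup_le fun x => ?_
    exact (ereal_sub_le_iff (Φ x.1 y) (f x.1) (h y)).mp (hterm_le x.1 y)
  -- G = the Ytil-transform of F
  set G : X → EReal := transformY Φ (↑htfin.toFinset : Set Y) F with hGdef
  have hG_ub : ∀ x : X, G x ≤ (f x : EReal) := by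
    intro x
    refine iSup_le fun y => ?_
    exact (ereal_sub_le_iff (Φ x y.1) (f x) (F y.1)).mpr (hF_term x y.1)
  obtain ⟨z0, hz0, _⟩ := hnet ybar
  have hG_term : ∀ (x : X) (z : Y), z ∈ htfin.toFinset →
      ((Φ x z - Fr z : ℝ) : EReal) ≤ G x := by
    intro x z hz
    have : ((Φ x z : ℝ) : EReal) - F z ≤ G x :=
      le_iSup (fun y : (↑htfin.toFinset : Set Y) => ((Φ x y.1 : ℝ) : EReal) - F y.1)
        ⟨z, Finset.mem_coe.mpr hz⟩
    rwa [← hFr, ← EReal.coe_sub] at this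
  have hG_ne_bot : ∀ x : X, G x ≠ ⊥ := by
    intro x hx
    have := hG_term x z0 hz0
    rw [hx, le_bot_iff] at this
    exact EReal.coe_ne_bot _ this
  have hG_ne_top : ∀ x : X, G x ≠ ⊤ :=
    fun x => ne_top_of_le_ne_top (EReal.coe_ne_top _) (hG_ub x)
  refine ⟨fun x => (G x).toReal, ?_, ?_, ?_⟩
  · refine ⟨F, fun x _ => ?_⟩
    show ((G x).toReal : EReal) = transformY Φ (↑htfin.toFinset : Set Y) F x
    rw [← hGdef]
    exact EReal.coe_toReal (hG_ne_top x) (hG_ne_bot x)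
  · intro x
    show ((G x).toReal : EReal) = transformY Φ (↑htfin.toFinset : Set Y) (transformX Φ Set.univ f) x
    rw [← hFdef, ← hGdef]
    exact EReal.coe_toReal (hG_ne_top x) (hG_ne_bot x)
  · intro x
    set gx : ℝ := (G x).toReal with hgxdef
    have hgx : (gx : EReal) = G x := EReal.coe_toReal (hG_ne_top x) (hG_ne_bot x)
    have hgf : gx ≤ f x := by
      rw [← EReal.coe_le_coe_iff, hgx]; exact hG_ub x
    have hfg : f x ≤ gx + 2 * L * δ := by
      rw [← EReal.coe_le_coe_iff, hh x]
      refine iSup_le fun y => ?_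
      have step1 : ((Φ x y.1 : ℝ) : EReal) - h y.1 ≤ ((Φ x y.1 - Fr y.1 : ℝ) : EReal) :=
        ereal_sub_le_of_le _ _ _ (le_trans (le_of_eq (hFr y.1)) (hFh y.1))
      refine le_trans step1 ?_
      rw [EReal.coe_le_coe_iff]
      obtain ⟨z, hz, hdz⟩ := hnet y.1
      have h1 : Fr z ≤ Fr y.1 + L * dist z y.1 := hFr_lip z y.1
      have h2 := abs_le.mp (hΦy' x y.1 z)
      have h3 : Φ x z - Fr z ≤ gx := by
        rw [← EReal.coe_le_coe_iff, hgx]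
        exact hG_term x z hz
      have h4 : L * dist y.1 z ≤ L * δ := mul_le_mul_of_nonneg_left (le_of_lt hdz) hL
      rw [dist_comm z y.1] at h1
      linarith [h2.2]
    rw [abs_lt]
    constructor <;> linarith
end

section
/- A finite Ỹ-parametrization r is lean if and only if it is X-convex: assuming that for each y ∈ Ỹ the supremum sup_{x ∈ X} (Φ(x, y) − r^Ỹ(x)) is attained, r satisfies r(y) = sup_{x ∈ X} (Φ(x, y) − r^Ỹ(x)) for all y ∈ Ỹ if and only if for every y ∈ Ỹ there exists x_y ∈ X with r^Ỹ(x_y) = Φ(x_y, y) − r(y). -/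
/-- A finite `Ỹ`-parametrization `r` is lean iff it is `X`-convex: assuming the supremum
defining `r^{XỸ}(y) = sup_{x} (Φ(x,y) − r^Ỹ(x))` is attained for each `y`, we have
`r(y) = sup_x (Φ(x,y) − r^Ỹ(x))` for all `y` iff for every `y` there is `x_y` with
`r^Ỹ(x_y) = Φ(x_y, y) − r(y)`. -/
theorem lean_iff_xconvex {X Y : Type*} [Fintype Y] [Nonempty Y]
    (Φ : X → Y → ℝ) (r : Y → ℝ) (rT : X → ℝ)
    (hrT : ∀ x : X, rT x = ⨆ y : Y, (Φ x y - r y))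
    (hatt : ∀ y : Y, ∃ x : X, ∀ x' : X, Φ x' y - rT x' ≤ Φ x y - rT x) :
    (∀ y : Y, r y = sSup (Set.range fun x : X => Φ x y - rT x)) ↔
      (∀ y : Y, ∃ x : X, rT x = Φ x y - r y) := by
  have hle : ∀ (x : X) (y : Y), Φ x y - r y ≤ rT x := by
    intro x y
    rw [hrT x]
    exact le_ciSup (f := fun y => Φ x y - r y) (Set.Finite.bddAbove (Set.finite_range _)) y
  constructor
  · intro h y
    obtain ⟨x, hx⟩ := hatt y
    refine ⟨x, ?_⟩
    have hsup : sSup (Set.range fun x' : X => Φ x' y - rT x') = Φ x y - rT x := by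
      apply le_antisymm
      · exact csSup_le ⟨_, ⟨x, rfl⟩⟩ (by rintro _ ⟨x', rfl⟩; exact hx x')
      · exact le_csSup ⟨_, by rintro _ ⟨x', rfl⟩; exact hx x'⟩ ⟨x, rfl⟩
    have := (h y).trans hsup
    linarith
  · intro h y
    obtain ⟨x, hx⟩ := h y
    apply le_antisymm
    · refine le_csSup ⟨r y, ?_⟩ ⟨x, show Φ x y - rT x = r y by linarith⟩
      rintro _ ⟨x', rfl⟩
      have := hle x' y
      show Φ x' y - rT x' ≤ r y
      linarith
    · refine csSup_le ⟨_, ⟨x, rfl⟩⟩ ?_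
      rintro _ ⟨x', rfl⟩
      have := hle x' y
      show Φ x' y - rT x' ≤ r y
      linarith
end
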